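/- arXiv:2601.19615 — 3 statements merged into one kernel-verified Lean document; each statement's English description precedes it below -/
import Mathlib

section
/- Let R be a binary relation on X and D_R the adjacency digraph with vertex set X and arc set R. If for every λ ∈ (0,1) the subgraph of D_R induced by X_λ is weakly connected, then the subgraph of D_R induced by X_SE is weakly connected. The same implication holds with 'weakly connected' replaced by 'strongly connected'. -/
open Set

noncomputable section

/-- The weighted-sum objective `λ·f₁ + (1−λ)·f₂`. -/
def wsum {X : Type*} (f₁ f₂ : X → ℝ) (lam : ℝ) (x : X) : ℝ :=
  lam * f₁ x + (1 - lam) * f₂ x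

/-- `XlamSet f₁ f₂ λ` is the set `X_λ` of minimizers of the weighted-sum scalarisation. -/
def XlamSet {X : Type*} (f₁ f₂ : X → ℝ) (lam : ℝ) : Set X :=
  {x | ∀ x' : X, wsum f₁ f₂ lam x ≤ wsum f₁ f₂ lam x'}

/-- `x` is supported efficient if it is optimal for some `λ ∈ (0,1)`. -/
def SuppEff {X : Type*} (f₁ f₂ : X → ℝ) (x : X) : Prop :=
  ∃ lam ∈ Set.Ioo (0 : ℝ) 1, x ∈ XlamSet f₁ f₂ lam

/-- The objSlope `s(x',x)` between the images of `x'` and `x`. -/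
def objSlope {X : Type*} (f₁ f₂ : X → ℝ) (x' x : X) : ℝ :=
  (f₂ x' - f₂ x) / (f₁ x' - f₁ x)

/-- `X^<(x)`: the solutions with strictly smaller first objective value. -/
def Xlt {X : Type*} (f₁ : X → ℝ) (x : X) : Set X := {x' | f₁ x' < f₁ x}

/-- `X^>(x)`: the solutions with strictly larger first objective value. -/
def Xgt {X : Type*} (f₁ : X → ℝ) (x : X) : Set X := {x' | f₁ x < f₁ x'}

/-- `S` induces a connected subgraph of the digraph with arc relation `R`: any two vertices
of `S` are joined by a path staying inside `S` and following arcs of `R`.  Weak connectivity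
is obtained by applying this to the symmetrisation of the arc relation, strong connectivity
by applying it to the arc relation itself. -/
def ConnOn {β : Type*} (R : β → β → Prop) (S : Set β) : Prop :=
  ∀ a ∈ S, ∀ b ∈ S, Relation.ReflTransGen (fun u v => u ∈ S ∧ v ∈ S ∧ R u v) a b

section Aux

variable {X : Type*} [Fintype X] [Nonempty X] (f₁ f₂ : X → ℝ)

lemma wsum_swap (lam : ℝ) (x : X) : wsum f₂ f₁ (1 - lam) x = wsum f₁ f₂ lam x := by
  unfold wsum; ring

lemma wsum_swap2 (lam : ℝ) (x : X) : wsum f₂ f₁ lam x = wsum f₁ f₂ (1 - lam) x := by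
  unfold wsum; ring

lemma XlamSet_swap' (lam : ℝ) : XlamSet f₂ f₁ lam = XlamSet f₁ f₂ (1 - lam) := by
  ext x
  unfold XlamSet
  simp only [mem_setOf_eq]
  constructor <;> intro hx x'
  · rw [← wsum_swap2 f₁ f₂ lam x, ← wsum_swap2 f₁ f₂ lam x']
    exact hx x'
  · rw [wsum_swap2 f₁ f₂ lam x, wsum_swap2 f₁ f₂ lam x']
    exact hx x'

lemma XlamSet_nonempty (lam : ℝ) : (XlamSet f₁ f₂ lam).Nonempty := by
  obtain ⟨x, hx⟩ := Finite.exists_min (wsum f₁ f₂ lam)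
  exact ⟨x, hx⟩

lemma local_stab (t : ℝ) :
    ∃ ε > 0, ∀ t' : ℝ, |t' - t| < ε → XlamSet f₁ f₂ t' ⊆ XlamSet f₁ f₂ t := by
  have key : ∀ x : X, ∃ δ > (0:ℝ), x ∉ XlamSet f₁ f₂ t →
      ∀ t' : ℝ, |t' - t| < δ → x ∉ XlamSet f₁ f₂ t' := by
    intro x
    by_cases hx : x ∈ XlamSet f₁ f₂ t
    · exact ⟨1, one_pos, fun h => absurd hx h⟩
    · simp only [XlamSet, mem_setOf_eq, not_forall, not_le] at hx
      obtain ⟨y, hy⟩ := hx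
      set c := wsum f₁ f₂ t x - wsum f₁ f₂ t y with hc
      have hcpos : 0 < c := by simp only [hc]; linarith
      set d := |f₁ x - f₂ x - (f₁ y - f₂ y)| with hd
      have hd0 : 0 ≤ d := abs_nonneg _
      refine ⟨c / (d + 1), by positivity, fun _ t' ht' hmem => ?_⟩
      have expand : wsum f₁ f₂ t' x - wsum f₁ f₂ t' y
          = c + (t' - t) * (f₁ x - f₂ x - (f₁ y - f₂ y)) := by
        simp only [hc]; unfold wsum; ring
      have h1 : |t' - t| * d < c := by
        have hd1 : (0:ℝ) < d + 1 := by linarith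
        calc |t' - t| * d ≤ |t' - t| * (d + 1) := by
              nlinarith [abs_nonneg (t' - t)]
          _ < (c / (d + 1)) * (d + 1) := mul_lt_mul_of_pos_right ht' hd1
          _ = c := div_mul_cancel₀ c (ne_of_gt hd1)
      have h2 : -c < (t' - t) * (f₁ x - f₂ x - (f₁ y - f₂ y)) := by
        have h3 := neg_abs_le ((t' - t) * (f₁ x - f₂ x - (f₁ y - f₂ y)))
        rw [abs_mul] at h3
        linarith
      have hyx : wsum f₁ f₂ t' y < wsum f₁ f₂ t' x := by linarith
      exact absurd (hmem y) (not_le.mpr hyx)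
  choose δ hδpos hδ using key
  refine ⟨Finset.univ.inf' Finset.univ_nonempty δ, ?_, fun t' ht' x' hx' => ?_⟩
  · exact (Finset.lt_inf'_iff _).mpr fun x _ => hδpos x
  · by_contra hx't
    exact hδ x' hx't t'
      (lt_of_lt_of_le ht' (Finset.inf'_le δ (Finset.mem_univ x'))) hx'

lemma reach (rel : X → X → Prop)
    (h : ∀ lam ∈ Set.Ioo (0:ℝ) 1, ConnOn rel (XlamSet f₁ f₂ lam))
    {α β : ℝ} (hα : α ∈ Set.Ioo (0:ℝ) 1) (hβ : β ∈ Set.Ioo (0:ℝ) 1) (hab : α ≤ β)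
    {a : X} (ha : a ∈ XlamSet f₁ f₂ α) :
    ∃ y ∈ XlamSet f₁ f₂ β,
      Relation.ReflTransGen
        (fun u v => u ∈ {x | SuppEff f₁ f₂ x} ∧ v ∈ {x | SuppEff f₁ f₂ x} ∧ rel u v) a y := by
  set S := {x | SuppEff f₁ f₂ x} with hS
  set rel' := fun u v => u ∈ S ∧ v ∈ S ∧ rel u v with hrel'
  set P : ℝ → Prop := fun t => ∃ y ∈ XlamSet f₁ f₂ t, Relation.ReflTransGen rel' a y with hP
  set T := {t : ℝ | t ∈ Icc α β ∧ P t} with hT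
  have hαT : α ∈ T := ⟨⟨le_refl _, hab⟩, a, ha, Relation.ReflTransGen.refl⟩
  have hTne : T.Nonempty := ⟨α, hαT⟩
  have hTbdd : BddAbove T := ⟨β, fun t ht => ht.1.2⟩
  set s := sSup T with hs
  have hsmem : s ∈ Icc α β := ⟨le_csSup hTbdd hαT, csSup_le hTne fun t ht => ht.1.2⟩
  have hsIoo : s ∈ Set.Ioo (0:ℝ) 1 := ⟨lt_of_lt_of_le hα.1 hsmem.1, lt_of_le_of_lt hsmem.2 hβ.2⟩
  obtain ⟨ε, hε, hloc⟩ := local_stab f₁ f₂ s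
  have hPs : P s := by
    obtain ⟨t, htT, hts⟩ := exists_lt_of_lt_csSup hTne (show s - ε < s by linarith)
    have htle : t ≤ s := le_csSup hTbdd htT
    have hsub : XlamSet f₁ f₂ t ⊆ XlamSet f₁ f₂ s :=
      hloc t (abs_lt.mpr ⟨by linarith, by linarith⟩)
    obtain ⟨_, y, hyt, hpath⟩ := htT
    exact ⟨y, hsub hyt, hpath⟩
  have hXsub : XlamSet f₁ f₂ s ⊆ S := fun x hx => ⟨s, hsIoo, hx⟩
  have step : ∀ y ∈ XlamSet f₁ f₂ s, ∀ z ∈ XlamSet f₁ f₂ s,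
      Relation.ReflTransGen rel' y z := fun y hy z hz =>
    Relation.ReflTransGen.mono (fun u v huv => ⟨hXsub huv.1, hXsub huv.2.1, huv.2.2⟩) _ _ (h s hsIoo y hy z hz)
  have hsβ : s = β := by
    by_contra hne
    have hslt : s < β := lt_of_le_of_ne hsmem.2 hne
    set t := min β (s + ε/2) with ht
    have hst : s < t := lt_min hslt (by linarith)
    have habs : |t - s| < ε := by
      have h1 : t ≤ s + ε / 2 := min_le_right _ _
      exact abs_lt.mpr ⟨by linarith, by linarith⟩
    have hsub := hloc t habs
    obtain ⟨z, hz⟩ := XlamSet_nonempty f₁ f₂ t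
    obtain ⟨y, hys, hpath⟩ := hPs
    have htT : t ∈ T := ⟨⟨le_trans hsmem.1 hst.le, min_le_left _ _⟩,
      z, hz, hpath.trans (step y hys z (hsub hz))⟩
    exact absurd (le_csSup hTbdd htT) (not_le.mpr hst)
  exact hsβ ▸ hPs

lemma main_lemma (rel : X → X → Prop)
    (h : ∀ lam ∈ Set.Ioo (0:ℝ) 1, ConnOn rel (XlamSet f₁ f₂ lam)) :
    ConnOn rel {x | SuppEff f₁ f₂ x} := by
  have hSeq : {x | SuppEff f₂ f₁ x} = {x | SuppEff f₁ f₂ x} := by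
    ext x
    simp only [mem_setOf_eq, SuppEff]
    constructor <;> rintro ⟨lam, hlam, hx⟩ <;>
      refine ⟨1 - lam, ⟨by linarith [hlam.2], by linarith [hlam.1]⟩, ?_⟩
    · rwa [XlamSet_swap'] at hx
    · rwa [XlamSet_swap', sub_sub_cancel]
  intro a ha b hb
  obtain ⟨α, hα, haα⟩ := ha
  obtain ⟨β, hβ, hbβ⟩ := hb
  have lift : ∀ y ∈ XlamSet f₁ f₂ β, Relation.ReflTransGen
      (fun u v => u ∈ {x | SuppEff f₁ f₂ x} ∧ v ∈ {x | SuppEff f₁ f₂ x} ∧ rel u v) y b :=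
    fun y hy => Relation.ReflTransGen.mono (fun u v huv =>
      ⟨⟨β, hβ, huv.1⟩, ⟨β, hβ, huv.2.1⟩, huv.2.2⟩) _ _ (h β hβ y hy b hbβ)
  rcases le_total α β with hle | hle
  · obtain ⟨y, hyβ, hpath⟩ := reach f₁ f₂ rel h hα hβ hle haα
    exact hpath.trans (lift y hyβ)
  · have h' : ∀ lam ∈ Set.Ioo (0:ℝ) 1, ConnOn rel (XlamSet f₂ f₁ lam) := by
      intro lam hlam
      rw [XlamSet_swap']
      exact h (1 - lam) ⟨by linarith [hlam.2], by linarith [hlam.1]⟩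
    have hα' : (1 - α) ∈ Set.Ioo (0:ℝ) 1 := ⟨by linarith [hα.2], by linarith [hα.1]⟩
    have hβ' : (1 - β) ∈ Set.Ioo (0:ℝ) 1 := ⟨by linarith [hβ.2], by linarith [hβ.1]⟩
    have ha' : a ∈ XlamSet f₂ f₁ (1 - α) := by rwa [XlamSet_swap', sub_sub_cancel]
    obtain ⟨y, hyβ, hpath⟩ := reach f₂ f₁ rel h' hα' hβ' (by linarith) ha'
    rw [XlamSet_swap', sub_sub_cancel] at hyβ
    rw [hSeq] at hpath
    exact hpath.trans (lift y hyβ)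

end Aux

/-- If for every `λ ∈ (0,1)` the subgraph of `D_R` induced by `X_λ` is
weakly (resp. strongly) connected, then the subgraph induced by the supported efficient
solutions `X_SE` is weakly (resp. strongly) connected. -/
theorem supported_efficient_connected_of_scalarisation_connected
    {X : Type*} [Fintype X] [Nonempty X] (f₁ f₂ : X → ℝ) (R : X → X → Prop) :
    ((∀ lam ∈ Set.Ioo (0 : ℝ) 1,
        ConnOn (fun a b => R a b ∨ R b a) (XlamSet f₁ f₂ lam)) →
      ConnOn (fun a b => R a b ∨ R b a) {x | SuppEff f₁ f₂ x}) ∧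
    ((∀ lam ∈ Set.Ioo (0 : ℝ) 1, ConnOn R (XlamSet f₁ f₂ lam)) →
      ConnOn R {x | SuppEff f₁ f₂ x}) :=
  ⟨fun h => main_lemma f₁ f₂ (fun a b => R a b ∨ R b a) h,
   fun h => main_lemma f₁ f₂ R h⟩
end
end

section
/- Let M be a matroid on a finite ground set E with bi-objective costs c = (c₁,c₂) : E → ℝ². Then the graph whose vertices are the supported efficient bases of M, with an edge between two bases B and B' whenever |B \ B'| = 1, is connected. -/
open Set

noncomputable section

/-- The weighted cost `c_λ(e) = λ·c₁(e) + (1−λ)·c₂(e)`. -/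
def clam {α : Type*} (c₁ c₂ : α → ℝ) (lam : ℝ) (e : α) : ℝ :=
  lam * c₁ e + (1 - lam) * c₂ e

/-- The total cost `f(B) = Σ_{e∈B} c(e)` of a set of elements. -/
def setCost {α : Type*} (c : α → ℝ) (B : Set α) : ℝ := ∑ᶠ e ∈ B, c e

/-- `B` is a `λ`-optimal basis of `M`: a basis minimizing `Σ_{e∈B} c_λ(e)` among all bases. -/
def OptBasis {α : Type*} (M : Matroid α) (c₁ c₂ : α → ℝ) (lam : ℝ) (B : Set α) : Prop :=
  M.IsBase B ∧ ∀ B' : Set α, M.IsBase B' →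
    setCost (clam c₁ c₂ lam) B ≤ setCost (clam c₁ c₂ lam) B'

/-- `B` is a supported efficient basis: `λ`-optimal for some `λ ∈ (0,1)`. -/
def SuppEffBasis {α : Type*} (M : Matroid α) (c₁ c₂ : α → ℝ) (B : Set α) : Prop :=
  ∃ lam ∈ Set.Ioo (0 : ℝ) 1, OptBasis M c₁ c₂ lam B

section Aux

variable {α : Type*} [Fintype α] {M : Matroid α} {c₁ c₂ : α → ℝ}

private lemma setCost_insert {c : α → ℝ} {s : Set α} {a : α} (h : a ∉ s) :
    setCost c (insert a s) = c a + setCost c s :=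
  finsum_mem_insert c h s.toFinite

private lemma setCost_exchange {c : α → ℝ} {B : Set α} {e f : α}
    (he : e ∈ B) (hf : f ∉ B) :
    setCost c (insert f (B \ {e})) = setCost c B - c e + c f := by
  have h1 : setCost c (insert f (B \ {e})) = c f + setCost c (B \ {e}) :=
    setCost_insert (fun h => hf h.1)
  have h2 : setCost c B = c e + setCost c (B \ {e}) := by
    nth_rewrite 1 [show B = insert e (B \ {e}) from
      (insert_diff_singleton.trans (insert_eq_self.2 he)).symm]
    exact setCost_insert (by simp)
  rw [h1, h2]; ring

private lemma setCost_clam (ν : ℝ) (s : Set α) :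
    setCost (clam c₁ c₂ ν) s = ν * setCost c₁ s + (1 - ν) * setCost c₂ s := by
  simp only [setCost, finsum_mem_eq_finite_toFinset_sum _ s.toFinite, clam]
  rw [Finset.sum_add_distrib, ← Finset.mul_sum, ← Finset.mul_sum]

/-- The edge relation restricted to supported efficient bases. -/
private def ER (M : Matroid α) (c₁ c₂ : α → ℝ) : Set α → Set α → Prop :=
  fun u v => u ∈ {B | SuppEffBasis M c₁ c₂ B} ∧ v ∈ {B | SuppEffBasis M c₁ c₂ B} ∧
    (u \ v).ncard = 1

/-- Two `λ`-optimal bases (for the same `λ ∈ (0,1)`) are connected through `λ`-optimal bases. -/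
private lemma optConn {lam : ℝ} (hlam : lam ∈ Set.Ioo (0 : ℝ) 1) :
    ∀ n (B B' : Set α), (B \ B').ncard = n →
      OptBasis M c₁ c₂ lam B → OptBasis M c₁ c₂ lam B' →
      Relation.ReflTransGen (ER M c₁ c₂) B B' := by
  intro n
  induction n using Nat.strong_induction_on with
  | _ n IH =>
  intro B B' hn hB hB'
  rcases n with _ | n
  · have hsub : B ⊆ B' := diff_eq_empty.mp ((Set.ncard_eq_zero (Set.toFinite _)).mp hn)
    rw [Matroid.IsBase.eq_of_subset_isBase hB.1 hB'.1 hsub]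
  · set w := clam c₁ c₂ lam with hw
    have hne : (B \ B').Nonempty :=
      Set.nonempty_of_ncard_ne_zero (by rw [hn]; exact (Nat.succ_ne_zero n))
    obtain ⟨e, heBB', hemax⟩ := Set.exists_max_image (B \ B') w (Set.toFinite _) hne
    obtain ⟨f, hfB'B, hBf⟩ := hB.1.exchange hB'.1 heBB'
    -- cost comparisons
    have hcost1 : setCost w (insert f (B \ {e})) = setCost w B - w e + w f :=
      setCost_exchange heBB'.1 hfB'B.2
    have hge1 : setCost w B ≤ setCost w (insert f (B \ {e})) := hB.2 _ hBf
    have hef : w e ≤ w f := by rw [hcost1] at hge1; linarith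
    obtain ⟨g, hgBB', hB'g⟩ := hB'.1.exchange hB.1 hfB'B
    have hcost2 : setCost w (insert g (B' \ {f})) = setCost w B' - w f + w g :=
      setCost_exchange hfB'B.1 hgBB'.2
    have hge2 : setCost w B' ≤ setCost w (insert g (B' \ {f})) := hB'.2 _ hB'g
    have hfg : w f ≤ w g := by rw [hcost2] at hge2; linarith
    have hge : w g ≤ w e := hemax g hgBB'
    have hwef : w f = w e := le_antisymm (hfg.trans hge) hef
    -- the new basis is `lam`-optimal
    have hBfopt : OptBasis M c₁ c₂ lam (insert f (B \ {e})) := by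
      refine ⟨hBf, fun D hD => ?_⟩
      rw [← hw, hcost1, hwef]
      have := hB.2 D hD
      rw [← hw] at this
      linarith
    have hefne : e ≠ f := fun h => hfB'B.2 (h ▸ heBB'.1)
    -- the edge from `B` to the new basis
    have hedge : ER M c₁ c₂ B (insert f (B \ {e})) := by
      refine ⟨⟨lam, hlam, hB⟩, ⟨lam, hlam, hBfopt⟩, ?_⟩
      have hkey : B \ insert f (B \ {e}) = {e} := by
        ext x
        simp only [mem_diff, mem_insert_iff, mem_singleton_iff, not_or, not_and, not_not]
        constructor
        · rintro ⟨hxB, _, hx⟩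
          exact hx hxB
        · rintro rfl
          exact ⟨heBB'.1, hefne, fun _ => rfl⟩
      rw [hkey, Set.ncard_singleton]
    -- the measure decreases
    have hmeas : ((insert f (B \ {e})) \ B').ncard = n := by
      have h1 : (insert f (B \ {e})) \ B' = (B \ B') \ {e} := by
        ext x
        simp only [mem_diff, mem_insert_iff, mem_singleton_iff]
        constructor
        · rintro ⟨hx | ⟨hxB, hxe⟩, hxB'⟩
          · exact absurd (hx ▸ hfB'B.1) hxB'
          · exact ⟨⟨hxB, hxB'⟩, hxe⟩
        · rintro ⟨⟨hxB, hxB'⟩, hxe⟩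
          exact ⟨Or.inr ⟨hxB, hxe⟩, hxB'⟩
      rw [h1, Set.ncard_diff_singleton_of_mem heBB', hn]
      omega
    exact Relation.ReflTransGen.head hedge
      (IH n (Nat.lt_succ_self n) _ _ hmeas hBfopt hB')

private lemma IOpt_closed (C : Set α) :
    IsClosed {ν : ℝ | OptBasis M c₁ c₂ ν C} := by
  by_cases hC : M.IsBase C
  · have h : {ν : ℝ | OptBasis M c₁ c₂ ν C} =
        ⋂ D ∈ {D : Set α | M.IsBase D},
          {ν : ℝ | setCost (clam c₁ c₂ ν) C ≤ setCost (clam c₁ c₂ ν) D} := by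
      ext ν
      simp only [mem_setOf_eq, mem_iInter, OptBasis, hC, true_and]
    rw [h]
    refine isClosed_biInter fun D _ => ?_
    have hCc : (fun ν : ℝ => setCost (clam c₁ c₂ ν) C) =
        fun ν => ν * setCost c₁ C + (1 - ν) * setCost c₂ C := funext fun ν => setCost_clam ν C
    have hDc : (fun ν : ℝ => setCost (clam c₁ c₂ ν) D) =
        fun ν => ν * setCost c₁ D + (1 - ν) * setCost c₂ D := funext fun ν => setCost_clam ν D
    exact isClosed_le (hCc ▸ (by fun_prop)) (hDc ▸ (by fun_prop))
  · have h : {ν : ℝ | OptBasis M c₁ c₂ ν C} = ∅ := by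
      ext ν; simp [OptBasis, hC]
    rw [h]; exact isClosed_empty

private lemma mainConn {lam mu : ℝ} (hlam : lam ∈ Set.Ioo (0 : ℝ) 1)
    (hmu : mu ∈ Set.Ioo (0 : ℝ) 1) (hle : lam ≤ mu) {B B' : Set α}
    (hB : OptBasis M c₁ c₂ lam B) (hB' : OptBasis M c₁ c₂ mu B') :
    Relation.ReflTransGen (ER M c₁ c₂) B B' := by
  -- existence of a `ν`-optimal basis for every `ν`
  have exOpt : ∀ ν : ℝ, ∃ C, OptBasis M c₁ c₂ ν C := by
    intro ν
    obtain ⟨C, hC, hmin⟩ := Set.exists_min_image {D : Set α | M.IsBase D}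
      (fun D => setCost (clam c₁ c₂ ν) D) (Set.toFinite _) ⟨B, hB.1⟩
    exact ⟨C, hC, hmin⟩
  set T : Set ℝ := ⋃ C ∈ {C : Set α | Relation.ReflTransGen (ER M c₁ c₂) B C},
    ({ν : ℝ | OptBasis M c₁ c₂ ν C} ∩ Icc lam mu) with hT
  have hTclosed : IsClosed T :=
    Set.Finite.isClosed_biUnion (Set.toFinite _)
      (fun C _ => (IOpt_closed C).inter isClosed_Icc)
  have hlamT : lam ∈ T := by
    refine mem_biUnion (Relation.ReflTransGen.refl) ⟨hB, le_refl lam, hle⟩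
  have hTsub : T ⊆ Icc lam mu := by
    intro x hx
    obtain ⟨C, _, _, hx2⟩ := mem_iUnion₂.mp hx
    exact hx2
  have hTbdd : BddAbove T := ⟨mu, fun x hx => (hTsub hx).2⟩
  have hsT : sSup T ∈ T := hTclosed.csSup_mem ⟨lam, hlamT⟩ hTbdd
  set s := sSup T with hs
  obtain ⟨C, hBC, hsC, hsIcc⟩ := mem_iUnion₂.mp hsT
  have hs01 : s ∈ Set.Ioo (0 : ℝ) 1 :=
    ⟨lt_of_lt_of_le hlam.1 hsIcc.1, lt_of_le_of_lt hsIcc.2 hmu.2⟩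
  have hsmu : s = mu := by
    by_contra hne
    have hslt : s < mu := lt_of_le_of_ne hsIcc.2 hne
    -- the union of the optimality intervals not containing s is closed and avoids s
    set U : Set ℝ := ⋃ D ∈ {D : Set α | s ∉ {ν : ℝ | OptBasis M c₁ c₂ ν D}},
      {ν : ℝ | OptBasis M c₁ c₂ ν D} with hU
    have hUclosed : IsClosed U :=
      Set.Finite.isClosed_biUnion (Set.toFinite _) (fun D _ => IOpt_closed D)
    have hsU : s ∉ U := by
      intro h
      obtain ⟨D, hD1, hD2⟩ := mem_iUnion₂.mp h
      exact hD1 hD2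
    obtain ⟨ε, hε, hball⟩ := Metric.isOpen_iff.mp hUclosed.isOpen_compl s hsU
    set ν' := min (s + ε / 2) mu with hν'
    have hsν' : s < ν' := lt_min (by linarith) hslt
    have hν'mu : ν' ≤ mu := min_le_right _ _
    have hν'Icc : ν' ∈ Icc lam mu := ⟨hsIcc.1.trans hsν'.le, hν'mu⟩
    have hν'ball : ν' ∈ Metric.ball s ε := by
      rw [Metric.mem_ball, Real.dist_eq, abs_of_pos (by linarith)]
      have : ν' ≤ s + ε / 2 := min_le_left _ _
      linarith
    obtain ⟨D, hD⟩ := exOpt ν'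
    have hsD : OptBasis M c₁ c₂ s D := by
      by_contra hcon
      exact (hball hν'ball) (mem_biUnion (mem_setOf_eq ▸ hcon) hD)
    -- D is connected to B via C at the common point s
    have hCD : Relation.ReflTransGen (ER M c₁ c₂) C D :=
      optConn hs01 _ C D rfl hsC hsD
    have hν'T : ν' ∈ T := mem_biUnion (hBC.trans hCD) ⟨hD, hν'Icc⟩
    exact absurd (le_csSup hTbdd hν'T) (not_le.mpr hsν')
  rw [hsmu] at hsC
  exact hBC.trans (optConn hmu _ C B' rfl hsC hB')

end Aux

/-- The graph on the supported efficient bases of `M`, with an edge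
between bases `B` and `B'` whenever `|B \ B'| = 1`, is connected. -/
theorem supported_efficient_bases_connected
    {α : Type*} [Fintype α] (M : Matroid α) (c₁ c₂ : α → ℝ) :
    ConnOn (fun B B' : Set α => (B \ B').ncard = 1)
      {B | SuppEffBasis M c₁ c₂ B} := by
  intro B hB B' hB'
  obtain ⟨lam, hlam, hOB⟩ := hB
  obtain ⟨mu, hmu, hOB'⟩ := hB'
  have hsymm : Symmetric (ER M c₁ c₂) := by
    rintro u v ⟨hu, hv, h⟩
    obtain ⟨_, _, hub⟩ := hu
    obtain ⟨_, _, hvb⟩ := hv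
    exact ⟨⟨_, ‹_›, hvb⟩, ⟨_, ‹_›, hub⟩, by rwa [hvb.1.ncard_diff_comm hub.1]⟩
  have key : Relation.ReflTransGen (ER M c₁ c₂) B B' := by
    rcases le_total lam mu with h | h
    · exact mainConn hlam hmu h hOB hOB'
    · exact (@Relation.ReflTransGen.stdSymm _ _ ⟨fun a b hab => hsymm hab⟩).symm _ _ (mainConn hmu hlam h hOB' hOB)
  exact key
end
end

section
/- Let λ¹ < … < λ^s be the elements of 𝓔 and λ⁰ = 0. Define bases recursively: B⁰ = B_M(S^↑_{λ⁰}), and for k ∈ {1,…,s}, B^k is obtained by starting from B^{k−1} \ E_{λ^k} and scanning the elements of E_{λ^k} in the order of S^↑_{λ^k} (sorted lexicographically by (c_{λ^k}, c₁), remaining ties broken by ⊴), adding each element whose addition keeps the current set independent. Then for every k ∈ {0,…,s}, B^k = B_M(S^↑_{λ^k}). -/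
open Set

noncomputable section

/-- The set `𝓟` of pairs `(e,f)` with `c₁(e) > c₁(f)` and `c₂(e) < c₂(f)`. -/
def Pset {α : Type*} (c₁ c₂ : α → ℝ) : Set (α × α) :=
  {p | c₁ p.2 < c₁ p.1 ∧ c₂ p.1 < c₂ p.2}

/-- The set `𝓔 = {λ(e,f) : (e,f) ∈ 𝓟}` of intersection values: for `(e,f) ∈ 𝓟`, `λ(e,f)` is
the unique `t ∈ (0,1)` with `c_t(e) = c_t(f)`. -/
def crossSet {α : Type*} (c₁ c₂ : α → ℝ) : Set ℝ :=
  {t | t ∈ Set.Ioo (0 : ℝ) 1 ∧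
    ∃ p ∈ Pset c₁ c₂, clam c₁ c₂ t p.1 = clam c₁ c₂ t p.2}

/-- `e` strictly precedes `f` in the ordering `S^↑_λ`, i.e. in the non-descending
lexicographic order by the key `(c_λ(e), c₁(e))` with remaining ties broken by the fixed
linear order on the ground set. -/
def precUp {α : Type*} [LinearOrder α] (c₁ c₂ : α → ℝ) (lam : ℝ) (e f : α) : Prop :=
  clam c₁ c₂ lam e < clam c₁ c₂ lam f ∨
    (clam c₁ c₂ lam e = clam c₁ c₂ lam f ∧
      (c₁ e < c₁ f ∨ (c₁ e = c₁ f ∧ e < f)))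

/-- `e` strictly precedes `f` in the ordering `S^↓_λ`, i.e. in the non-descending
lexicographic order by the key `(c_λ(e), −c₁(e))` with remaining ties broken by the fixed
linear order on the ground set. -/
def precDown {α : Type*} [LinearOrder α] (c₁ c₂ : α → ℝ) (lam : ℝ) (e f : α) : Prop :=
  clam c₁ c₂ lam e < clam c₁ c₂ lam f ∨
    (clam c₁ c₂ lam e = clam c₁ c₂ lam f ∧
      (c₁ f < c₁ e ∨ (c₁ e = c₁ f ∧ e < f)))

open Classical in
/-- One step of the greedy algorithm: add `e` to the current set `I` if this keeps it
independent in `M`. -/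
def greedyStep {α : Type*} (M : Matroid α) (I : Set α) (e : α) : Set α :=
  if M.Indep (insert e I) then insert e I else I

/-- The greedy basis `B_M(𝓢)`: scan the list `𝓢` in order, starting from `∅`, adding each
element whose addition keeps the current set independent in `M`. -/
def greedy {α : Type*} (M : Matroid α) (S : List α) : Set α :=
  S.foldl (greedyStep M) ∅

/-- `E_λ`: the union of the pairs `{e,f}` over `(e,f) ∈ 𝓟` with `λ(e,f) = λ`
(equivalently, `c_λ(e) = c_λ(f)`). -/
def Eset {α : Type*} (c₁ c₂ : α → ℝ) (lam : ℝ) : Set α :=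
  {x | ∃ p ∈ Pset c₁ c₂, clam c₁ c₂ lam p.1 = clam c₁ c₂ lam p.2 ∧ (x = p.1 ∨ x = p.2)}

/-- `L` is the enumeration `S^↑_λ` of the set `G`: it enumerates `G` without repetition,
sorted non-descendingly by the lexicographic key `(c_λ(e), c₁(e))` with remaining ties
broken by the fixed linear order. -/
def IsUpList {α : Type*} [LinearOrder α] (c₁ c₂ : α → ℝ) (lam : ℝ)
    (G : Set α) (L : List α) : Prop :=
  L.Nodup ∧ (∀ e : α, e ∈ L ↔ e ∈ G) ∧ L.Pairwise (precUp c₁ c₂ lam)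

section GreedyBasics

variable {α : Type*} {M : Matroid α} {I S : Set α} {e : α}

lemma greedyStep_pos (h : M.Indep (insert e I)) : greedyStep M I e = insert e I := by
  unfold greedyStep; rw [if_pos h]

lemma greedyStep_neg (h : ¬ M.Indep (insert e I)) : greedyStep M I e = I := by
  unfold greedyStep; rw [if_neg h]

lemma subset_greedyStep (M : Matroid α) (I : Set α) (e : α) : I ⊆ greedyStep M I e := by
  unfold greedyStep; split
  · exact Set.subset_insert _ _
  · exact subset_rfl

lemma greedyStep_subset_insert (M : Matroid α) (I : Set α) (e : α) :
    greedyStep M I e ⊆ insert e I := by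
  unfold greedyStep; split
  · exact subset_rfl
  · exact Set.subset_insert _ _

lemma Matroid.Indep.greedyStep (h : M.Indep I) (e : α) : M.Indep (greedyStep M I e) := by
  unfold _root_.greedyStep; split
  · assumption
  · exact h

lemma subset_foldl_greedyStep (M : Matroid α) :
    ∀ (L : List α) (S : Set α), S ⊆ L.foldl (greedyStep M) S := by
  intro L
  induction L with
  | nil => intro S; exact subset_rfl
  | cons a T ih =>
    intro S
    exact (subset_greedyStep M S a).trans (ih (greedyStep M S a))

lemma foldl_greedyStep_subset (M : Matroid α) :
    ∀ (L : List α) (S : Set α), L.foldl (greedyStep M) S ⊆ S ∪ {x | x ∈ L} := by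
  intro L
  induction L with
  | nil => intro S; simp
  | cons a T ih =>
    intro S
    refine (ih (greedyStep M S a)).trans ?_
    have h1 : greedyStep M S a ⊆ insert a S := greedyStep_subset_insert M S a
    intro x hx
    rcases hx with hx | hx
    · rcases h1 hx with h | h
      · exact Or.inr (by simp [h])
      · exact Or.inl h
    · exact Or.inr (by simp only [Set.mem_setOf_eq, List.mem_cons] at hx ⊢; exact Or.inr hx)

lemma foldl_greedyStep_indep (M : Matroid α) :
    ∀ (L : List α) (S : Set α), M.Indep S → M.Indep (L.foldl (greedyStep M) S) := by
  intro L
  induction L with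
  | nil => intro S h; exact h
  | cons a T ih => intro S h; exact ih _ (h.greedyStep a)

lemma mem_closure_foldl_greedyStep (M : Matroid α) (hE : M.E = Set.univ) :
    ∀ (L : List α) (S : Set α), M.Indep S → ∀ x ∈ L,
      x ∈ M.closure (L.foldl (greedyStep M) S) := by
  intro L
  induction L with
  | nil => intro S _ x hx; simp at hx
  | cons a T ih =>
    intro S hS x hx
    have hstep : M.Indep (greedyStep M S a) := hS.greedyStep a
    have hsub : greedyStep M S a ⊆ T.foldl (greedyStep M) (greedyStep M S a) :=
      subset_foldl_greedyStep M T _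
    rcases List.mem_cons.mp hx with rfl | hx
    · by_cases hi : M.Indep (insert x S)
      · have : x ∈ greedyStep M S x := by rw [greedyStep_pos hi]; exact Set.mem_insert _ _
        have hx2 : x ∈ T.foldl (greedyStep M) (greedyStep M S x) := hsub this
        simp only [List.foldl_cons]
        exact M.subset_closure _ (by rw [hE]; exact Set.subset_univ _) hx2
      · by_cases hxS : x ∈ S
        · have : x ∈ T.foldl (greedyStep M) (greedyStep M S x) :=
            hsub ((subset_greedyStep M S x) hxS)
          simp only [List.foldl_cons]
          exact M.subset_closure _ (by rw [hE]; exact Set.subset_univ _) this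
        · have hcl : x ∈ M.closure S := by
            by_contra hcl
            exact hi ((hS.insert_indep_iff_of_notMem hxS).mpr
              ⟨by rw [hE]; exact Set.mem_univ _, hcl⟩)
          have : M.closure S ⊆ M.closure ((x :: T).foldl (greedyStep M) S) := by
            apply M.closure_subset_closure
            simp only [List.foldl_cons]
            exact (subset_greedyStep M S x).trans (subset_foldl_greedyStep M T _)
          exact this hcl
    · simpa only [List.foldl_cons] using ih (greedyStep M S a) hstep x hx

lemma closure_foldl_greedyStep (M : Matroid α) (hE : M.E = Set.univ)
    (L : List α) (S : Set α) (hS : M.Indep S) :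
    M.closure (L.foldl (greedyStep M) S) = M.closure (S ∪ {x | x ∈ L}) := by
  apply Set.Subset.antisymm
  · exact M.closure_subset_closure (foldl_greedyStep_subset M L S)
  · apply Matroid.closure_subset_closure_of_subset_closure
    rintro x (hx | hx)
    · exact M.closure_subset_closure (subset_foldl_greedyStep M L S)
        (M.subset_closure S (by rw [hE]; exact Set.subset_univ _) hx)
    · exact mem_closure_foldl_greedyStep M hE L S hS x hx

end GreedyBasics

section ListHelpers

variable {α : Type*} {M : Matroid α}

/-- Decisions of greedy depend only on the closure of the starting state. -/
lemma foldl_greedyStep_congr (hE : M.E = Set.univ) :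
    ∀ (L : List α), L.Nodup → ∀ (S₁ S₂ : Set α), M.Indep S₁ → M.Indep S₂ →
      M.closure S₁ = M.closure S₂ → (∀ x ∈ L, x ∉ S₁) → (∀ x ∈ L, x ∉ S₂) →
      ∃ N : Set α, L.foldl (greedyStep M) S₁ = S₁ ∪ N ∧
        L.foldl (greedyStep M) S₂ = S₂ ∪ N := by
  intro L
  induction L with
  | nil => intro _ S₁ S₂ _ _ _ _ _; exact ⟨∅, by simp, by simp⟩
  | cons a T ih =>
    intro hnd S₁ S₂ h1 h2 hcl hd1 hd2
    have hnd' : T.Nodup := (List.nodup_cons.mp hnd).2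
    have haT : a ∉ T := (List.nodup_cons.mp hnd).1
    have ha1 : a ∉ S₁ := hd1 a ((List.mem_cons_self (a := a) (l := T)))
    have ha2 : a ∉ S₂ := hd2 a ((List.mem_cons_self (a := a) (l := T)))
    have hiff : M.Indep (insert a S₁) ↔ M.Indep (insert a S₂) := by
      rw [h1.insert_indep_iff_of_notMem ha1, h2.insert_indep_iff_of_notMem ha2, hcl]
    by_cases hacc : M.Indep (insert a S₁)
    · have hacc2 : M.Indep (insert a S₂) := hiff.mp hacc
      have hcl' : M.closure (insert a S₁) = M.closure (insert a S₂) := by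
        rw [← M.closure_insert_closure_eq_closure_insert, hcl,
          M.closure_insert_closure_eq_closure_insert]
      obtain ⟨N, e1, e2⟩ := ih hnd' (insert a S₁) (insert a S₂) hacc hacc2 hcl'
        (fun x hx hmem => by
          rcases Set.mem_insert_iff.mp hmem with rfl | hmem
          · exact haT hx
          · exact hd1 x (List.mem_cons_of_mem a hx) hmem)
        (fun x hx hmem => by
          rcases Set.mem_insert_iff.mp hmem with rfl | hmem
          · exact haT hx
          · exact hd2 x (List.mem_cons_of_mem a hx) hmem)
      refine ⟨insert a N, ?_, ?_⟩
      · simp only [List.foldl_cons, greedyStep_pos hacc, e1]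
        rw [Set.insert_union, Set.union_insert]
      · simp only [List.foldl_cons, greedyStep_pos hacc2, e2]
        rw [Set.insert_union, Set.union_insert]
    · have hacc2 : ¬ M.Indep (insert a S₂) := fun h => hacc (hiff.mpr h)
      obtain ⟨N, e1, e2⟩ := ih hnd' S₁ S₂ h1 h2 hcl
        (fun x hx => hd1 x (List.mem_cons_of_mem a hx))
        (fun x hx => hd2 x (List.mem_cons_of_mem a hx))
      exact ⟨N, by simp only [List.foldl_cons, greedyStep_neg hacc, e1],
        by simp only [List.foldl_cons, greedyStep_neg hacc2, e2]⟩

/-- Split a list along a prefix-closed set. -/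
lemma exists_split_of_pairwise (C : Set α) :
    ∀ (L : List α), L.Pairwise (fun a b => b ∈ C → a ∈ C) →
      ∃ P Q : List α, L = P ++ Q ∧ (∀ x ∈ P, x ∈ C) ∧ (∀ x ∈ Q, x ∉ C) := by
  intro L
  induction L with
  | nil => intro _; exact ⟨[], [], by simp, by simp, by simp⟩
  | cons a T ih =>
    intro hp
    rcases List.pairwise_cons.mp hp with ⟨ha, hT⟩
    by_cases haC : a ∈ C
    · obtain ⟨P, Q, hPQ, hP, hQ⟩ := ih hT
      exact ⟨a :: P, Q, by simp [hPQ], by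
        intro x hx; rcases List.mem_cons.mp hx with rfl | hx
        · exact haC
        · exact hP x hx, hQ⟩
    · refine ⟨[], a :: T, by simp, by simp, ?_⟩
      intro x hx
      rcases List.mem_cons.mp hx with rfl | hx
      · exact haC
      · exact fun hxC => haC (ha x hx hxC)

/-- Two lists sorted by an asymmetric relation with the same members are equal. -/
lemma eq_of_pairwise_asymm {r : α → α → Prop} (hasym : ∀ e f, r e f → ¬ r f e) :
    ∀ (L₁ L₂ : List α), L₁.Pairwise r → L₂.Pairwise r →
      (∀ x, x ∈ L₁ ↔ x ∈ L₂) → L₁ = L₂ := by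
  intro L₁
  induction L₁ with
  | nil =>
    intro L₂ _ _ hmem
    cases L₂ with
    | nil => rfl
    | cons b T₂ => exact absurd ((hmem b).mpr ((List.mem_cons_self (a := b) (l := T₂)))) (by simp)
  | cons a T ih =>
    intro L₂ hp1 hp2 hmem
    cases L₂ with
    | nil => exact absurd ((hmem a).mp ((List.mem_cons_self (a := a) (l := T)))) (by simp)
    | cons b T₂ =>
      rcases List.pairwise_cons.mp hp1 with ⟨ha, hpT⟩
      rcases List.pairwise_cons.mp hp2 with ⟨hb, hpT₂⟩
      have hab : a = b := by
        by_contra hne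
        have haL2 : a ∈ b :: T₂ := (hmem a).mp ((List.mem_cons_self (a := a) (l := T)))
        have hbL1 : b ∈ a :: T := (hmem b).mpr ((List.mem_cons_self (a := b) (l := T₂)))
        have h1 : r b a := hb a (by rcases List.mem_cons.mp haL2 with h | h
                                    · exact absurd h hne
                                    · exact h)
        have h2 : r a b := ha b (by rcases List.mem_cons.mp hbL1 with h | h
                                    · exact absurd h.symm hne
                                    · exact h)
        exact hasym a b h2 h1
      subst hab
      congr 1
      apply ih T₂ hpT hpT₂
      intro x
      constructor
      · intro hx
        have hxa : x ≠ a := fun h => hasym a a (h ▸ ha x hx) (h ▸ ha x hx)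
        rcases List.mem_cons.mp ((hmem x).mp (List.mem_cons_of_mem a hx)) with h | h
        · exact absurd h hxa
        · exact h
      · intro hx
        have hxa : x ≠ a := fun h => hasym a a (h ▸ hb x hx) (h ▸ hb x hx)
        rcases List.mem_cons.mp ((hmem x).mpr (List.mem_cons_of_mem a hx)) with h | h
        · exact absurd h hxa
        · exact h

lemma append_cons_inj {x : α} :
    ∀ (a : List α) {b : List α} (c : List α) {d : List α},
      a ++ x :: b = c ++ x :: d → x ∉ a → x ∉ c → a = c ∧ b = d := by
  intro a
  induction a with
  | nil =>
    intro b c d h _ hxc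
    cases c with
    | nil => simpa using h
    | cons y t =>
      simp only [List.nil_append, List.cons_append, List.cons.injEq] at h
      exact absurd (h.1 ▸ (List.mem_cons_self (a := y) (l := t))) (h.1 ▸ hxc)
  | cons y t ih =>
    intro b c d h hxa hxc
    cases c with
    | nil =>
      simp only [List.cons_append, List.nil_append, List.cons.injEq] at h
      exact absurd ((List.mem_cons_self (a := y) (l := t))) (h.1 ▸ hxa)
    | cons z u =>
      simp only [List.cons_append, List.cons.injEq] at h
      have h1 := h.1
      have h2 := h.2
      subst h1
      have := ih u h2 (fun hh => hxa (List.mem_cons_of_mem y hh))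
        (fun hh => hxc (List.mem_cons_of_mem y hh))
      exact ⟨by rw [this.1], this.2⟩

lemma exists_split_at_of_nodup {x : α} {L : List α} (hx : x ∈ L) (hnd : L.Nodup) :
    ∃ P R : List α, L = P ++ x :: R ∧ x ∉ P := by
  obtain ⟨P, R, rfl⟩ := List.append_of_mem hx
  refine ⟨P, R, rfl, ?_⟩
  intro hxP
  have hdisj := List.disjoint_of_nodup_append hnd
  exact hdisj hxP ((List.mem_cons_self (a := x) (l := R)))

end ListHelpers

section Tail

variable {α : Type*} {M : Matroid α}

lemma greedy_prefix_state (M : Matroid α) {L P R : List α} {d : α}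
    (hL : L = P ++ d :: R) (hnd : L.Nodup) :
    P.foldl (greedyStep M) ∅ = greedy M L ∩ {x | x ∈ P} := by
  have hB : greedy M L = (d :: R).foldl (greedyStep M) (P.foldl (greedyStep M) ∅) := by
    rw [greedy, hL, List.foldl_append]
  apply Set.Subset.antisymm
  · intro x hx
    refine ⟨?_, ?_⟩
    · rw [hB]; exact subset_foldl_greedyStep M (d :: R) _ hx
    · have := foldl_greedyStep_subset M P ∅ hx
      simpa using this
  · intro x hx
    obtain ⟨hxB, hxP⟩ := hx
    have hx2 := foldl_greedyStep_subset M (d :: R) (P.foldl (greedyStep M) ∅) (hB ▸ hxB)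
    rcases hx2 with h | h
    · exact h
    · exfalso
      have hdisj := List.disjoint_of_nodup_append (hL ▸ hnd)
      exact hdisj hxP h

lemma greedy_mem_iff (M : Matroid α) {L P R : List α} {d : α}
    (hL : L = P ++ d :: R) (hnd : L.Nodup) :
    d ∈ greedy M L ↔ M.Indep (insert d (greedy M L ∩ {x | x ∈ P})) := by
  have hst := greedy_prefix_state M hL hnd
  have hB : greedy M L = R.foldl (greedyStep M)
      (greedyStep M (P.foldl (greedyStep M) ∅) d) := by
    rw [greedy, hL, List.foldl_append, List.foldl_cons]
  constructor
  · intro hd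
    have hBi : M.Indep (greedy M L) := foldl_greedyStep_indep M L ∅ M.empty_indep
    apply hBi.subset
    rw [Set.insert_subset_iff]
    exact ⟨hd, Set.inter_subset_left⟩
  · intro hind
    rw [← hst] at hind
    have : greedyStep M (P.foldl (greedyStep M) ∅) d
        = insert d (P.foldl (greedyStep M) ∅) := greedyStep_pos hind
    rw [hB, this]
    exact subset_foldl_greedyStep M R _ (Set.mem_insert _ _)

open Classical in
lemma tail_inv (M : Matroid α) {Es : Set α} {L : List α} (hnd : L.Nodup) :
    ∀ (Q₂ Q₁ : List α),
      L.filter (fun x => decide (x ∈ Es)) = Q₁ ++ Q₂ →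
      Q₂.foldl (greedyStep M) ((greedy M L \ Es) ∪ (greedy M L ∩ {x | x ∈ Q₁})) =
        (greedy M L \ Es) ∪ (greedy M L ∩ {x | x ∈ Q₁ ++ Q₂}) := by
  intro Q₂
  induction Q₂ with
  | nil => intro Q₁ _; simp
  | cons d Q₂ ih =>
    intro Q₁ hQ
    set B := greedy M L with hBdef
    have hBi : M.Indep B := foldl_greedyStep_indep M L ∅ M.empty_indep
    have hTsub : (B \ Es) ∪ (B ∩ {x | x ∈ Q₁}) ⊆ B :=
      Set.union_subset Set.diff_subset Set.inter_subset_left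
    by_cases hdB : d ∈ B
    · have hind : M.Indep (insert d ((B \ Es) ∪ (B ∩ {x | x ∈ Q₁}))) :=
        hBi.subset (Set.insert_subset hdB hTsub)
      have hstep : greedyStep M ((B \ Es) ∪ (B ∩ {x | x ∈ Q₁})) d
          = (B \ Es) ∪ (B ∩ {x | x ∈ Q₁ ++ [d]}) := by
        rw [greedyStep_pos hind]
        have : {x | x ∈ Q₁ ++ [d]} = insert d {x | x ∈ Q₁} := by
          ext x; simp [List.mem_append, or_comm]
        rw [this, Set.inter_insert_of_mem hdB, Set.union_insert]
      have := ih (Q₁ ++ [d]) (by rw [hQ, List.append_assoc]; rfl)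
      simp only [List.foldl_cons, hstep]
      rw [this, List.append_assoc]
      rfl
    · -- d is rejected
      have hdf : d ∈ L.filter (fun x => decide (x ∈ Es)) := by
        rw [hQ]; exact List.mem_append_right _ ((List.mem_cons_self (a := d) (l := Q₂)))
      have hdL : d ∈ L := List.mem_of_mem_filter hdf
      have hdEs : d ∈ Es := by simpa using List.of_mem_filter hdf
      obtain ⟨P, R, hLsplit, hdP⟩ := exists_split_at_of_nodup hdL hnd
      have hfilt : L.filter (fun x => decide (x ∈ Es))
          = P.filter (fun x => decide (x ∈ Es)) ++ d :: R.filter (fun x => decide (x ∈ Es)) := by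
        rw [hLsplit, List.filter_append, List.filter_cons]
        simp [hdEs]
      have hndf : (L.filter (fun x => decide (x ∈ Es))).Nodup := hnd.filter _
      have hdQ₁ : d ∉ Q₁ := by
        rw [hQ] at hndf
        have := List.disjoint_of_nodup_append hndf
        exact fun h => this h ((List.mem_cons_self (a := d) (l := Q₂)))
      have hdPf : d ∉ P.filter (fun x => decide (x ∈ Es)) :=
        fun h => hdP (List.mem_of_mem_filter h)
      have hQ₁eq : Q₁ = P.filter (fun x => decide (x ∈ Es)) := by
        have := append_cons_inj Q₁ (P.filter (fun x => decide (x ∈ Es)))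
          (by rw [← hQ, hfilt]) hdQ₁ hdPf
        exact this.1
      have hrej : ¬ M.Indep (insert d (B ∩ {x | x ∈ P})) :=
        fun h => hdB ((greedy_mem_iff M hLsplit hnd).mpr h)
      have hsub2 : B ∩ {x | x ∈ P} ⊆ (B \ Es) ∪ (B ∩ {x | x ∈ Q₁}) := by
        intro x ⟨hxB, hxP⟩
        by_cases hxE : x ∈ Es
        · refine Or.inr ⟨hxB, ?_⟩
          rw [hQ₁eq]
          exact List.mem_filter.mpr ⟨hxP, by simpa using hxE⟩
        · exact Or.inl ⟨hxB, hxE⟩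
      have hrej2 : ¬ M.Indep (insert d ((B \ Es) ∪ (B ∩ {x | x ∈ Q₁}))) := by
        intro h
        exact hrej (h.subset (Set.insert_subset_insert hsub2))
      have hstep : greedyStep M ((B \ Es) ∪ (B ∩ {x | x ∈ Q₁})) d
          = (B \ Es) ∪ (B ∩ {x | x ∈ Q₁ ++ [d]}) := by
        rw [greedyStep_neg hrej2]
        congr 1
        ext x
        simp only [Set.mem_inter_iff, Set.mem_setOf_eq, List.mem_append, List.mem_singleton]
        constructor
        · rintro ⟨h1, h2⟩; exact ⟨h1, Or.inl h2⟩
        · rintro ⟨h1, h2 | rfl⟩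
          · exact ⟨h1, h2⟩
          · exact absurd h1 hdB
      have := ih (Q₁ ++ [d]) (by rw [hQ, List.append_assoc]; rfl)
      simp only [List.foldl_cons, hstep]
      rw [this, List.append_assoc]
      rfl

open Classical in
lemma tail_lemma (M : Matroid α) (Es : Set α) {L : List α} (hnd : L.Nodup) :
    (L.filter (fun x => decide (x ∈ Es))).foldl (greedyStep M) (greedy M L \ Es)
      = greedy M L := by
  have := tail_inv M hnd (Es := Es) (L.filter (fun x => decide (x ∈ Es))) []
    (by simp)
  simp only [List.nil_append] at this
  have hemp : greedy M L ∩ {x | x ∈ ([] : List α)} = ∅ := by simp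
  rw [hemp, Set.union_empty] at this
  rw [this]
  have hBL : greedy M L ⊆ {x | x ∈ L} := by
    have := foldl_greedyStep_subset M L ∅
    rw [Set.empty_union] at this
    exact this
  have : greedy M L ∩ {x | x ∈ L.filter (fun x => decide (x ∈ Es))} = greedy M L ∩ Es := by
    ext x
    simp only [Set.mem_inter_iff, Set.mem_setOf_eq, List.mem_filter, decide_eq_true_eq]
    constructor
    · rintro ⟨h1, _, h3⟩; exact ⟨h1, h3⟩
    · rintro ⟨h1, h2⟩; exact ⟨h1, hBL h1, h2⟩
  rw [this, Set.diff_union_inter]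

end Tail

section Main

variable {α : Type*}

lemma main_lemma_s14 (M : Matroid α) (hE : M.E = Set.univ)
    (w : α → ℝ) (Es : Set α) (r₁ r₂ : α → α → Prop)
    (hr₁w : ∀ e f, r₁ e f → w e ≤ w f)
    (hasym₁ : ∀ e f, r₁ e f → ¬ r₁ f e)
    (hasym₂ : ∀ e f, r₂ e f → ¬ r₂ f e)
    (hagree : ∀ e f, ¬(w e = w f ∧ e ∈ Es ∧ f ∈ Es) → (r₁ e f ↔ r₂ e f))
    (hpure : ∀ e f, w e = w f → e ∈ Es → f ∈ Es) :
    ∀ (n : ℕ) (L₁ L₂ : List α) (S₁ S₂ : Set α), L₁.length ≤ n →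
      L₁.Nodup → L₂.Nodup → (∀ x, x ∈ L₁ ↔ x ∈ L₂) →
      L₁.Pairwise r₁ → L₂.Pairwise r₂ →
      M.Indep S₁ → M.Indep S₂ → M.closure S₁ = M.closure S₂ → S₁ \ Es = S₂ \ Es →
      (∀ x ∈ L₁, x ∉ S₁) → (∀ x ∈ L₂, x ∉ S₂) →
      (L₁.foldl (greedyStep M) S₁) \ Es = (L₂.foldl (greedyStep M) S₂) \ Es := by
  intro n
  induction n with
  | zero =>
    intro L₁ L₂ S₁ S₂ hlen hnd₁ hnd₂ hmem _ _ _ _ _ hSdiff _ _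
    have h1 : L₁ = [] := List.eq_nil_of_length_eq_zero (Nat.le_zero.mp hlen)
    subst h1
    have h2 : L₂ = [] := List.eq_nil_iff_forall_not_mem.mpr (fun x hx => by
      simpa using (hmem x).mpr hx)
    subst h2
    simpa using hSdiff
  | succ n ih =>
    intro L₁ L₂ S₁ S₂ hlen hnd₁ hnd₂ hmem hp₁ hp₂ hS₁ hS₂ hcl hSdiff hd₁ hd₂
    cases L₁ with
    | nil =>
      have h2 : L₂ = [] := List.eq_nil_iff_forall_not_mem.mpr (fun x hx => by
        simpa using (hmem x).mpr hx)
      subst h2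
      simpa using hSdiff
    | cons e T =>
      set C : Set α := {x | w x = w e} with hC
      -- L₁ is prefix-closed w.r.t. C
      have hpc₁ : (e :: T).Pairwise (fun a b => b ∈ C → a ∈ C) := by
        refine hp₁.imp_of_mem ?_
        intro a b ha hb hab hbC
        rcases List.mem_cons.mp ha with rfl | haT
        · exact rfl
        · have h1 : w e ≤ w a := hr₁w e a ((List.pairwise_cons.mp hp₁).1 a haT)
          have h2 : w a ≤ w b := hr₁w a b hab
          have : w b = w e := hbC
          exact le_antisymm (by linarith) (by linarith)
      obtain ⟨P₁, Q₁, hL₁, hP₁C, hQ₁C⟩ := exists_split_of_pairwise C (e :: T) hpc₁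
      have hmemP₁ : ∀ x, x ∈ P₁ ↔ (x ∈ e :: T ∧ x ∈ C) := by
        intro x
        constructor
        · intro hx; exact ⟨hL₁ ▸ List.mem_append_left _ hx, hP₁C x hx⟩
        · rintro ⟨hx, hxC⟩
          rcases List.mem_append.mp (hL₁ ▸ hx) with h | h
          · exact h
          · exact absurd hxC (hQ₁C x h)
      have hmemQ₁ : ∀ x, x ∈ Q₁ ↔ (x ∈ e :: T ∧ x ∉ C) := by
        intro x
        constructor
        · intro hx; exact ⟨hL₁ ▸ List.mem_append_right _ hx, hQ₁C x hx⟩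
        · rintro ⟨hx, hxC⟩
          rcases List.mem_append.mp (hL₁ ▸ hx) with h | h
          · exact absurd (hP₁C x h) hxC
          · exact h
      have heP₁ : e ∈ P₁ := (hmemP₁ e).mpr ⟨(List.mem_cons_self (a := e) (l := T)), rfl⟩
      have hndL₁ : (P₁ ++ Q₁).Nodup := hL₁ ▸ hnd₁
      have hpL₁ : (P₁ ++ Q₁).Pairwise r₁ := hL₁ ▸ hp₁
      rcases List.pairwise_append.mp hpL₁ with ⟨hpP₁, hpQ₁, hPQ₁⟩
      -- L₂ is prefix-closed w.r.t. C
      have hpc₂ : L₂.Pairwise (fun a b => b ∈ C → a ∈ C) := by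
        refine hp₂.imp_of_mem ?_
        intro a b ha hb hab hbC
        by_contra haC
        have hbC' : w b = w e := hbC
        have hwab : ¬ (w a = w b) := fun h => haC (show w a = w e from h.trans hbC')
        have hr₁ab : r₁ a b := (hagree a b (fun h => hwab h.1)).mpr hab
        have hbP₁ : b ∈ P₁ := (hmemP₁ b).mpr ⟨(hmem b).mpr hb, hbC⟩
        have haQ₁ : a ∈ Q₁ := (hmemQ₁ a).mpr ⟨(hmem a).mpr ha, haC⟩
        exact hasym₁ a b hr₁ab (hPQ₁ b hbP₁ a haQ₁)
      obtain ⟨P₂, Q₂, hL₂, hP₂C, hQ₂C⟩ := exists_split_of_pairwise C L₂ hpc₂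
      have hmemP₂ : ∀ x, x ∈ P₂ ↔ (x ∈ L₂ ∧ x ∈ C) := by
        intro x
        constructor
        · intro hx; exact ⟨hL₂ ▸ List.mem_append_left _ hx, hP₂C x hx⟩
        · rintro ⟨hx, hxC⟩
          rcases List.mem_append.mp (hL₂ ▸ hx) with h | h
          · exact h
          · exact absurd hxC (hQ₂C x h)
      have hmemQ₂ : ∀ x, x ∈ Q₂ ↔ (x ∈ L₂ ∧ x ∉ C) := by
        intro x
        constructor
        · intro hx; exact ⟨hL₂ ▸ List.mem_append_right _ hx, hQ₂C x hx⟩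
        · rintro ⟨hx, hxC⟩
          rcases List.mem_append.mp (hL₂ ▸ hx) with h | h
          · exact absurd (hP₂C x h) hxC
          · exact h
      have hndL₂ : (P₂ ++ Q₂).Nodup := hL₂ ▸ hnd₂
      have hpL₂ : (P₂ ++ Q₂).Pairwise r₂ := hL₂ ▸ hp₂
      rcases List.pairwise_append.mp hpL₂ with ⟨hpP₂, hpQ₂, hPQ₂⟩
      have hmemPP : ∀ x, x ∈ P₁ ↔ x ∈ P₂ := by
        intro x; rw [hmemP₁, hmemP₂, hmem]
      have hmemQQ : ∀ x, x ∈ Q₁ ↔ x ∈ Q₂ := by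
        intro x; rw [hmemQ₁, hmemQ₂, hmem]
      set M₁ := P₁.foldl (greedyStep M) S₁ with hM₁
      set M₂ := P₂.foldl (greedyStep M) S₂ with hM₂
      have hM₁i : M.Indep M₁ := foldl_greedyStep_indep M P₁ S₁ hS₁
      have hM₂i : M.Indep M₂ := foldl_greedyStep_indep M P₂ S₂ hS₂
      have hPset : {x | x ∈ P₁} = {x | x ∈ P₂} := Set.ext fun x => hmemPP x
      have hclM : M.closure M₁ = M.closure M₂ := by
        rw [hM₁, hM₂, closure_foldl_greedyStep M hE P₁ S₁ hS₁,
          closure_foldl_greedyStep M hE P₂ S₂ hS₂, hPset,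
          ← Matroid.closure_union_closure_left_eq, hcl,
          Matroid.closure_union_closure_left_eq]
      have hdQ₁ : ∀ x ∈ Q₁, x ∉ M₁ := by
        intro x hx hxM
        rcases foldl_greedyStep_subset M P₁ S₁ hxM with h | h
        · exact hd₁ x (hL₁ ▸ List.mem_append_right _ hx) h
        · exact List.disjoint_of_nodup_append hndL₁ h hx
      have hdQ₂ : ∀ x ∈ Q₂, x ∉ M₂ := by
        intro x hx hxM
        rcases foldl_greedyStep_subset M P₂ S₂ hxM with h | h
        · exact hd₂ x (hL₂ ▸ List.mem_append_right _ hx) h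
        · exact List.disjoint_of_nodup_append hndL₂ h hx
      have hMdiff : M₁ \ Es = M₂ \ Es := by
        by_cases heEs : e ∈ Es
        · -- the whole class C lies inside Es
          have hCEs : C ⊆ Es := fun x hx => hpure e x (show w x = w e from hx).symm heEs
          have h₁ : M₁ \ Es = S₁ \ Es := by
            apply Set.Subset.antisymm
            · rintro x ⟨hxM, hxE⟩
              rcases foldl_greedyStep_subset M P₁ S₁ hxM with h | h
              · exact ⟨h, hxE⟩
              · exact absurd (hCEs (hP₁C x h)) hxE
            · exact Set.diff_subset_diff_left (subset_foldl_greedyStep M P₁ S₁)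
          have h₂ : M₂ \ Es = S₂ \ Es := by
            apply Set.Subset.antisymm
            · rintro x ⟨hxM, hxE⟩
              rcases foldl_greedyStep_subset M P₂ S₂ hxM with h | h
              · exact ⟨h, hxE⟩
              · exact absurd (hCEs (hP₂C x h)) hxE
            · exact Set.diff_subset_diff_left (subset_foldl_greedyStep M P₂ S₂)
          rw [h₁, h₂, hSdiff]
        · -- the whole class C is disjoint from Es, and P₁ = P₂
          have hCEs : ∀ x ∈ C, x ∉ Es := fun x hx hxE =>
            heEs (hpure x e (show w x = w e from hx) hxE)
          have hpP₂r₁ : P₂.Pairwise r₁ := by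
            refine hpP₂.imp_of_mem ?_
            intro a b ha hb hab
            exact (hagree a b (fun h => hCEs a (hP₂C a ha) h.2.1)).mpr hab
          have hPeq : P₁ = P₂ := eq_of_pairwise_asymm hasym₁ P₁ P₂ hpP₁ hpP₂r₁ hmemPP
          obtain ⟨N, e1, e2⟩ := foldl_greedyStep_congr hE P₁
            ((List.nodup_append.mp hndL₁).1) S₁ S₂ hS₁ hS₂ hcl
            (fun x hx => hd₁ x (hL₁ ▸ List.mem_append_left _ hx))
            (fun x hx => hd₂ x (by rw [hL₂]; exact List.mem_append_left _ (hPeq ▸ hx)))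
          rw [hM₁, hM₂, ← hPeq, e1, e2, Set.union_diff_distrib, Set.union_diff_distrib,
            hSdiff]
      -- apply induction hypothesis on the suffixes
      have hlenQ : Q₁.length ≤ n := by
        have h1 : (e :: T).length = P₁.length + Q₁.length := by
          rw [hL₁, List.length_append]
        have h2 : 1 ≤ P₁.length := List.length_pos_of_mem heP₁
        simp only [List.length_cons] at h1 hlen
        omega
      have := ih Q₁ Q₂ M₁ M₂ hlenQ (List.nodup_append.mp hndL₁).2.1
        (List.nodup_append.mp hndL₂).2.1 hmemQQ hpQ₁ hpQ₂ hM₁i hM₂i hclM hMdiff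
        hdQ₁ hdQ₂
      rw [hL₁, hL₂, List.foldl_append, List.foldl_append]
      exact this

end Main

section Order

variable {α : Type*} [LinearOrder α]

lemma precUp_iff_lt (c₁ c₂ : α → ℝ) (t : ℝ) (e f : α) :
    precUp c₁ c₂ t e f ↔
      toLex (clam c₁ c₂ t e, toLex (c₁ e, e)) < toLex (clam c₁ c₂ t f, toLex (c₁ f, f)) := by
  rw [Prod.Lex.lt_iff, Prod.Lex.lt_iff]
  rfl

lemma precUp_asymm (c₁ c₂ : α → ℝ) (t : ℝ) (e f : α) :
    precUp c₁ c₂ t e f → ¬ precUp c₁ c₂ t f e := by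
  rw [precUp_iff_lt, precUp_iff_lt]
  exact fun h1 h2 => absurd h1 (lt_asymm h2)

lemma precUp_irrefl (c₁ c₂ : α → ℝ) (t : ℝ) (e : α) : ¬ precUp c₁ c₂ t e e :=
  fun h => precUp_asymm c₁ c₂ t e e h h

lemma precUp_trans (c₁ c₂ : α → ℝ) (t : ℝ) (e f g : α) :
    precUp c₁ c₂ t e f → precUp c₁ c₂ t f g → precUp c₁ c₂ t e g := by
  rw [precUp_iff_lt, precUp_iff_lt, precUp_iff_lt]
  exact lt_trans

lemma precUp_trichotomy (c₁ c₂ : α → ℝ) (t : ℝ) (e f : α) :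
    e = f ∨ precUp c₁ c₂ t e f ∨ precUp c₁ c₂ t f e := by
  rcases lt_trichotomy (toLex (clam c₁ c₂ t e, toLex (c₁ e, e)))
      (toLex (clam c₁ c₂ t f, toLex (c₁ f, f))) with h | h | h
  · exact Or.inr (Or.inl ((precUp_iff_lt c₁ c₂ t e f).mpr h))
  · left
    have := congrArg (fun x => (ofLex ((ofLex x).2)).2) h
    simpa using this
  · exact Or.inr (Or.inr ((precUp_iff_lt c₁ c₂ t f e).mpr h))

lemma clam_le_of_precUp {c₁ c₂ : α → ℝ} {t : ℝ} {e f : α} (h : precUp c₁ c₂ t e f) :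
    clam c₁ c₂ t e ≤ clam c₁ c₂ t f := by
  rcases h with h | ⟨h, _⟩
  · exact le_of_lt h
  · exact le_of_eq h

lemma pairwise_and' {R S : α → α → Prop} :
    ∀ {l : List α}, l.Pairwise R → l.Pairwise S → l.Pairwise (fun a b => R a b ∧ S a b) := by
  intro l
  induction l with
  | nil => intro _ _; exact List.Pairwise.nil
  | cons a T ih =>
    intro h1 h2
    rcases List.pairwise_cons.mp h1 with ⟨ha1, hT1⟩
    rcases List.pairwise_cons.mp h2 with ⟨ha2, hT2⟩
    exact List.pairwise_cons.mpr ⟨fun b hb => ⟨ha1 b hb, ha2 b hb⟩, ih hT1 hT2⟩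

lemma exists_upList [Fintype α] (c₁ c₂ : α → ℝ) (t : ℝ) :
    ∃ L : List α, IsUpList c₁ c₂ t Set.univ L := by
  classical
  set r : α → α → Prop := fun e f => precUp c₁ c₂ t e f ∨ e = f with hr
  haveI : DecidableRel r := fun a b => Classical.dec _
  haveI : IsTotal α r := ⟨fun a b => by
    rcases precUp_trichotomy c₁ c₂ t a b with h | h | h
    · exact Or.inl (Or.inr h)
    · exact Or.inl (Or.inl h)
    · exact Or.inr (Or.inl h)⟩
  haveI : IsTrans α r := ⟨fun a b c hab hbc => by
    rcases hab with hab | rfl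
    · rcases hbc with hbc | rfl
      · exact Or.inl (precUp_trans c₁ c₂ t a b c hab hbc)
      · exact Or.inl hab
    · exact hbc⟩
  refine ⟨List.insertionSort r Finset.univ.toList, ?_, ?_, ?_⟩
  · exact (List.perm_insertionSort r _).nodup_iff.mpr (Finset.nodup_toList _)
  · intro e
    simp [List.mem_insertionSort]
  · have hs : (List.insertionSort r Finset.univ.toList).Pairwise r :=
      List.pairwise_insertionSort r _
    have hn : (List.insertionSort r Finset.univ.toList).Nodup :=
      (List.perm_insertionSort r _).nodup_iff.mpr (Finset.nodup_toList _)
    refine (pairwise_and' hs hn).imp ?_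
    rintro a b ⟨hab | rfl, hne⟩
    · exact hab
    · exact absurd rfl hne

end Order

section Cost

variable {α : Type*} [LinearOrder α] {c₁ c₂ : α → ℝ}

lemma clam_sub (c₁ c₂ : α → ℝ) (t : ℝ) (e f : α) :
    clam c₁ c₂ t e - clam c₁ c₂ t f
      = t * ((c₁ e - c₁ f) - (c₂ e - c₂ f)) + (c₂ e - c₂ f) := by
  unfold clam; ring

/-- Purity: the `c_ν`-tie class of a member of `E_ν` is contained in `E_ν`. -/
lemma Eset_pure {ν : ℝ} (hν0 : 0 < ν) (hν1 : ν < 1) {e f : α}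
    (hw : clam c₁ c₂ ν e = clam c₁ c₂ ν f) (he : e ∈ Eset c₁ c₂ ν) :
    f ∈ Eset c₁ c₂ ν := by
  obtain ⟨⟨u, v⟩, ⟨h1, h2⟩, heq, he'⟩ := he
  simp only at h1 h2 heq
  have hfu : clam c₁ c₂ ν f = clam c₁ c₂ ν u := by
    rcases he' with rfl | rfl
    · exact hw.symm
    · exact hw.symm.trans heq.symm
  have hkey := clam_sub c₁ c₂ ν f u
  rw [hfu, sub_self] at hkey
  rcases lt_trichotomy (c₁ f) (c₁ u) with hc | hc | hc
  · -- (u,f) ∈ Pset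
    have hc2 : c₂ u < c₂ f := by nlinarith
    exact ⟨(u, f), ⟨hc, hc2⟩, hfu.symm, Or.inr rfl⟩
  · -- same costs as u, pair with v
    have hc2 : c₂ f = c₂ u := by
      have h1ν : (0:ℝ) < 1 - ν := by linarith
      nlinarith
    refine ⟨(f, v), ⟨by rw [hc]; exact h1, by rw [hc2]; exact h2⟩, ?_, Or.inl rfl⟩
    exact hfu.trans heq
  · -- (f,u) ∈ Pset
    have hc2 : c₂ f < c₂ u := by nlinarith
    exact ⟨(f, u), ⟨hc, hc2⟩, hfu, Or.inl rfl⟩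

/-- Between two consecutive crossing values the up-orders agree, except within
tied classes of `E_ν`. -/
lemma precUp_agree {μ ν : ℝ} (hν0 : 0 < ν) (hν1 : ν < 1) (hμ0 : 0 ≤ μ) (hμν : μ < ν)
    (hno : ∀ t, μ < t → t < ν → t ∉ crossSet c₁ c₂) {e f : α}
    (hR : ¬(clam c₁ c₂ ν e = clam c₁ c₂ ν f ∧ e ∈ Eset c₁ c₂ ν ∧ f ∈ Eset c₁ c₂ ν))
    (h : precUp c₁ c₂ ν e f) : precUp c₁ c₂ μ e f := by
  set a : ℝ := c₁ e - c₁ f with ha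
  set b : ℝ := c₂ e - c₂ f with hb
  have key : ∀ t : ℝ, clam c₁ c₂ t e - clam c₁ c₂ t f = t * (a - b) + b :=
    fun t => clam_sub c₁ c₂ t e f
  have hμ1 : μ < 1 := lt_trans hμν hν1
  rcases h with hlt | ⟨heq, htie⟩
  · -- strict inequality at ν
    have hdν : ν * (a - b) + b < 0 := by rw [← key ν]; linarith
    rcases lt_trichotomy (clam c₁ c₂ μ e) (clam c₁ c₂ μ f) with h1 | h1 | h1
    · exact Or.inl h1
    · -- tie at μ: tie-break by c₁ must favour e
      have hdμ : μ * (a - b) + b = 0 := by rw [← key μ]; linarith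
      have hab : a - b < 0 := by nlinarith
      have hA : a < 0 := by nlinarith
      exact Or.inr ⟨h1, Or.inl (by linarith [ha])⟩
    · -- crossing strictly between μ and ν: contradiction
      exfalso
      have hdμ : 0 < μ * (a - b) + b := by rw [← key μ]; linarith
      have hab : a - b < 0 := by nlinarith
      set lst : ℝ := b / (b - a) with hlst
      have hba : 0 < b - a := by linarith
      have hdl : lst * (a - b) + b = 0 := by
        rw [hlst, div_mul_eq_mul_div, div_add' _ _ _ hba.ne', div_eq_zero_iff]
        left; ring
      have hμl : μ < lst := by nlinarith
      have hlν : lst < ν := by nlinarith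
      have hbpos : 0 < b := by nlinarith
      have hapos : a < 0 := by nlinarith
      refine hno lst hμl hlν ⟨⟨by linarith, by linarith⟩, (f, e), ⟨by simp; linarith, by simp; linarith⟩, ?_⟩
      have := key lst
      rw [hdl] at this
      simp only
      linarith
  · -- tie at ν
    rcases htie with hc | ⟨hc, hef⟩
    · -- c₁ e < c₁ f: then (f,e) is a crossing pair at ν, contradicting hR
      exfalso
      have hdν : ν * (a - b) + b = 0 := by rw [← key ν]; linarith
      have hA : a < 0 := by simp only [ha]; linarith
      have hB : 0 < b := by nlinarith
      refine hR ⟨heq, ?_, ?_⟩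
      · exact ⟨(f, e), ⟨by simp only; linarith, by simp only; linarith⟩, heq.symm, Or.inr rfl⟩
      · exact ⟨(f, e), ⟨by simp only; linarith, by simp only; linarith⟩, heq.symm, Or.inl rfl⟩
    · -- full tie: identical keys
      have hdν : ν * (a - b) + b = 0 := by rw [← key ν]; linarith
      have hA : a = 0 := by simp only [ha]; linarith
      have hB : b = 0 := by nlinarith
      have hmueq : clam c₁ c₂ μ e = clam c₁ c₂ μ f := by
        have h2 := key μ
        rw [hA, hB] at h2
        have h3 : clam c₁ c₂ μ e - clam c₁ c₂ μ f = 0 := by rw [h2]; ring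
        linarith
      exact Or.inr ⟨hmueq, Or.inr ⟨hc, hef⟩⟩

end Cost

/-- Let `λ¹ < … < λ^s` enumerate `𝓔` and `λ⁰ = 0`.  Define `B⁰` as the
greedy basis for `S^↑_{λ⁰}` and, for `k ∈ {1,…,s}`, obtain `B^k` by starting from
`B^{k−1} \ E_{λ^k}` and greedily scanning the elements of `E_{λ^k}` in the order
`S^↑_{λ^k}`.  Then `B^k = B_M(S^↑_{λ^k})` for every `k ∈ {0,…,s}`. -/
theorem tailored_algorithm_bases_are_greedy_bases
    {α : Type*} [Fintype α] [LinearOrder α] (M : Matroid α) (hE : M.E = Set.univ)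
    (c₁ c₂ : α → ℝ) (s : ℕ) (lam : ℕ → ℝ) (hlam0 : lam 0 = 0)
    (hmono : ∀ i j : ℕ, i < j → j ≤ s → lam i < lam j)
    (hrange : ∀ t : ℝ, t ∈ crossSet c₁ c₂ ↔ ∃ k, 1 ≤ k ∧ k ≤ s ∧ lam k = t)
    (B : ℕ → Set α)
    (hB0 : ∀ L : List α, IsUpList c₁ c₂ (lam 0) Set.univ L → B 0 = greedy M L)
    (hstep : ∀ k, 1 ≤ k → k ≤ s → ∀ L : List α,
      L.Nodup → (∀ e : α, e ∈ L ↔ e ∈ Eset c₁ c₂ (lam k)) →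
      L.Pairwise (precUp c₁ c₂ (lam k)) →
      B k = L.foldl (greedyStep M) (B (k - 1) \ Eset c₁ c₂ (lam k))) :
    ∀ k ≤ s, ∀ L : List α, IsUpList c₁ c₂ (lam k) Set.univ L → B k = greedy M L := by
  intro k
  induction k with
  | zero => intro _ L hL; exact hB0 L hL
  | succ k ihk =>
    intro hks L hL
    classical
    obtain ⟨hnd, hmem, hpw⟩ := hL
    set ν : ℝ := lam (k + 1) with hνdef
    set μ : ℝ := lam k with hμdef
    have hcross : ν ∈ crossSet c₁ c₂ := (hrange ν).mpr ⟨k + 1, Nat.le_add_left 1 k, hks, rfl⟩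
    have hν0 : 0 < ν := hcross.1.1
    have hν1 : ν < 1 := hcross.1.2
    have hkle : k ≤ s := Nat.le_of_succ_le hks
    have hμ0 : 0 ≤ μ := by
      rcases Nat.eq_zero_or_pos k with rfl | hk
      · rw [hμdef, hlam0]
      · have := hmono 0 k hk hkle
        rw [hlam0] at this
        exact le_of_lt this
    have hμν : μ < ν := hmono k (k + 1) (Nat.lt_succ_self k) hks
    have hno : ∀ t : ℝ, μ < t → t < ν → t ∉ crossSet c₁ c₂ := by
      intro t h1 h2 hc
      obtain ⟨j, hj1, hjs, hjt⟩ := (hrange t).mp hc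
      rcases lt_or_ge j (k + 1) with hj | hj
      · have hle : lam j ≤ μ := by
          rcases Nat.lt_succ_iff_lt_or_eq.mp hj with h | rfl
          · exact le_of_lt (hmono j k h hkle)
          · exact le_refl _
        rw [hjt] at hle
        linarith
      · have hle : ν ≤ lam j := by
          rcases Nat.eq_or_lt_of_le hj with rfl | h
          · exact le_refl _
          · exact le_of_lt (hmono (k + 1) j h hjs)
        rw [hjt] at hle
        linarith
    set Es : Set α := Eset c₁ c₂ ν with hEsdef
    set LE : List α := L.filter (fun x => decide (x ∈ Es)) with hLEdef
    have hLEnd : LE.Nodup := hnd.filter _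
    have hLEmem : ∀ e : α, e ∈ LE ↔ e ∈ Es := by
      intro e
      rw [hLEdef, List.mem_filter]
      simp only [decide_eq_true_eq]
      constructor
      · exact fun h => h.2
      · exact fun h => ⟨(hmem e).mpr (Set.mem_univ e), h⟩
    have hLEpw : LE.Pairwise (precUp c₁ c₂ ν) :=
      List.Pairwise.sublist (List.filter_sublist (l := L)) hpw
    have hstep' : B (k + 1) = LE.foldl (greedyStep M) (B k \ Es) := by
      have := hstep (k + 1) (Nat.le_add_left 1 k) hks LE hLEnd hLEmem hLEpw
      simpa using this
    -- greedy list at μ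
    obtain ⟨L', hL'⟩ := exists_upList c₁ c₂ μ
    obtain ⟨hnd', hmem', hpw'⟩ := hL'
    have hBk : B k = greedy M L' := ihk hkle L' ⟨hnd', hmem', hpw'⟩
    -- agreement of the two orders outside tied classes of Es
    have hagree : ∀ e f : α,
        ¬(clam c₁ c₂ ν e = clam c₁ c₂ ν f ∧ e ∈ Es ∧ f ∈ Es) →
        (precUp c₁ c₂ ν e f ↔ precUp c₁ c₂ μ e f) := by
      intro e f hR
      constructor
      · exact precUp_agree hν0 hν1 hμ0 hμν hno hR
      · intro h2
        rcases precUp_trichotomy c₁ c₂ ν e f with rfl | h | h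
        · exact absurd h2 (precUp_irrefl c₁ c₂ μ e)
        · exact h
        · exfalso
          have hR' : ¬(clam c₁ c₂ ν f = clam c₁ c₂ ν e ∧ f ∈ Es ∧ e ∈ Es) :=
            fun ⟨ha, hb, hc⟩ => hR ⟨ha.symm, hc, hb⟩
          exact precUp_asymm c₁ c₂ μ f e
            (precUp_agree hν0 hν1 hμ0 hμν hno hR' h) h2
    have hdiff : greedy M L \ Es = greedy M L' \ Es := by
      refine main_lemma_s14 M hE (clam c₁ c₂ ν) Es (precUp c₁ c₂ ν) (precUp c₁ c₂ μ)
        (fun e f h => clam_le_of_precUp h)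
        (fun e f => precUp_asymm c₁ c₂ ν e f)
        (fun e f => precUp_asymm c₁ c₂ μ e f)
        hagree
        (fun e f hw he => Eset_pure hν0 hν1 hw he)
        L.length L L' ∅ ∅ (le_refl _) hnd hnd'
        (fun x => by rw [hmem x, hmem' x])
        hpw hpw' M.empty_indep M.empty_indep rfl rfl
        (fun x _ hx => hx) (fun x _ hx => hx)
    have htail : LE.foldl (greedyStep M) (greedy M L \ Es) = greedy M L :=
      tail_lemma M Es hnd
    rw [hstep', hBk, ← hdiff, htail]
end
end
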